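/- For every d ≥ 4, the number of distinct substrings of length d of the string L_d = σ^d(0) is at least Σ_{j=⌈d/2⌉-1}^{d-2} (d - j - 1) = ⌊d/2⌋·(⌊d/2⌋+1)/2; in particular it is at least d(d-1)/8. -/

import Mathlib

/-!
Since σ^{d+1}(0) = σ^d(0) σ^d(0) 1, the word L_d = σ^d(0) contains L_j L_j for every j < d, and
L_j ends with 0 1^j while starting with 0. So for every k ≤ d - j - 2 the word L_d has a factor of
length d of the form u 0 1^j 0 v with |u| = k, cut out of L_j L_j around the seam. For
j, j' ≥ m := ⌈d/2⌉ - 1 such a factor has |u| ≤ m ≤ j', so if it also reads u' 0 1^j' 0 v' with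
|u| < |u'|, then position |u'| lies inside the run 1^j of the first reading, yet carries a 0 in the
second. Hence the pairs (j, k) with m ≤ j ≤ d - 2 give pairwise distinct factors, and there are
Σ_j (d - j - 1) of them.
-/

/-- The morphism σ on {0,1} (0 ↦ false, 1 ↦ true) with σ(0) = 001 and σ(1) = 1,
given by its images on symbols. -/
def sigmaRule : Bool → List Bool
  | false => [false, false, true]
  | true => [true]

def sigmaM (w : List Bool) : List Bool := w.flatMap sigmaRule

def subCount (w : List Bool) (k : ℕ) : ℕ :=
  (((w.tails.map (fun t => t.take k)).filter (fun s => s.length == k)).dedup).length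

section

open List

theorem sigmaM_append (u v : List Bool) : sigmaM (u ++ v) = sigmaM u ++ sigmaM v :=
  flatMap_append

theorem sigmaM_iterate_append (n : ℕ) (u v : List Bool) :
    sigmaM^[n] (u ++ v) = sigmaM^[n] u ++ sigmaM^[n] v := by
  induction n generalizing u v with
  | zero => rfl
  | succ n ih => rw [Function.iterate_succ_apply, sigmaM_append, ih]; rfl

theorem sigmaM_iterate_true (n : ℕ) : sigmaM^[n] [true] = [true] :=
  Function.iterate_fixed rfl n

def sigmaWord (d : ℕ) : List Bool := sigmaM^[d] [false]

theorem sigmaWord_succ (d : ℕ) : sigmaWord (d + 1) = sigmaWord d ++ sigmaWord d ++ [true] := by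
  rw [sigmaWord, Function.iterate_succ_apply,
    show sigmaM [false] = [false] ++ [false] ++ [true] from rfl,
    sigmaM_iterate_append, sigmaM_iterate_append, sigmaM_iterate_true]
  rfl

theorem sigmaWord_length (d : ℕ) : (sigmaWord d).length = 2 ^ (d + 1) - 1 := by
  induction d with
  | zero => rfl
  | succ d ih =>
    rw [sigmaWord_succ, length_append, length_append, ih, pow_succ 2 (d + 1)]
    have := Nat.one_le_two_pow (n := d + 1)
    simp only [length_singleton]
    omega

theorem exists_sigmaWord_eq_false_cons (d : ℕ) : ∃ t, sigmaWord d = false :: t := by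
  induction d with
  | zero => exact ⟨[], rfl⟩
  | succ d ih =>
    obtain ⟨t, ht⟩ := ih
    exact ⟨t ++ sigmaWord d ++ [true], by rw [sigmaWord_succ, ht]; rfl⟩

theorem exists_sigmaWord_eq_append_replicate (d : ℕ) :
    ∃ p, sigmaWord d = p ++ false :: replicate d true := by
  induction d with
  | zero => exact ⟨[], rfl⟩
  | succ d ih =>
    obtain ⟨p, hp⟩ := ih
    refine ⟨sigmaWord d ++ p, ?_⟩
    rw [sigmaWord_succ, hp, replicate_succ']
    simp

theorem sigmaWord_prefix_of_le {j d : ℕ} (h : j ≤ d) : sigmaWord j <+: sigmaWord d := by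
  induction d, h using Nat.le_induction with
  | base => exact prefix_refl _
  | succ d _ ih =>
    rw [sigmaWord_succ, append_assoc]
    exact ih.trans (prefix_append _ _)

theorem sigmaWord_append_self_infix {j d : ℕ} (h : j < d) :
    sigmaWord j ++ sigmaWord j <:+: sigmaWord d := by
  have : sigmaWord j ++ sigmaWord j <+: sigmaWord (j + 1) := by
    rw [sigmaWord_succ]; exact prefix_append _ _
  exact (this.trans (sigmaWord_prefix_of_le h)).isInfix

def runWord (u : List Bool) (j : ℕ) (v : List Bool) : List Bool :=
  u ++ false :: (replicate j true ++ false :: v)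

theorem runWord_length (u : List Bool) (j : ℕ) (v : List Bool) :
    (runWord u j v).length = u.length + j + v.length + 2 := by
  simp [runWord]; omega

theorem getElem?_runWord_length (u : List Bool) (j : ℕ) (v : List Bool) :
    (runWord u j v)[u.length]? = some false := by
  simp [runWord]

theorem getElem?_runWord_of_lt (u : List Bool) {j t : ℕ} (v : List Bool) (ht : t < j) :
    (runWord u j v)[u.length + 1 + t]? = some true := by
  rw [runWord, getElem?_append_right (by omega), show u.length + 1 + t - u.length = t + 1 by omega,
    getElem?_cons_succ, getElem?_append_left (by simpa using ht), getElem?_replicate_of_lt ht]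

theorem replicate_true_append_false_cons_inj {j j' : ℕ} {v v' : List Bool}
    (h : replicate j true ++ false :: v = replicate j' true ++ false :: v') : j = j' ∧ v = v' := by
  induction j generalizing j' with
  | zero => cases j' <;> simp_all [replicate_succ]
  | succ j ih =>
    cases j' with
    | zero => simp [replicate_succ] at h
    | succ j' => simpa [replicate_succ] using ih (by simpa [replicate_succ] using h)

theorem length_le_of_runWord_eq {u u' v v' : List Bool} {j j' : ℕ}
    (h : runWord u j v = runWord u' j' v') (hu' : u'.length ≤ u.length + j) :
    u'.length ≤ u.length := by
  by_contra! hlt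
  have hfalse := getElem?_runWord_length u' j' v'
  rw [← h, show u'.length = u.length + 1 + (u'.length - u.length - 1) by omega,
    getElem?_runWord_of_lt u v (by omega)] at hfalse
  exact Bool.noConfusion (Option.some.inj hfalse)

theorem runWord_inj {u u' v v' : List Bool} {j j' : ℕ} (h : runWord u j v = runWord u' j' v')
    (hu : u.length ≤ j') (hu' : u'.length ≤ j) : u = u' ∧ j = j' ∧ v = v' := by
  have hlen : u.length = u'.length :=
    le_antisymm (length_le_of_runWord_eq h.symm (by omega)) (length_le_of_runWord_eq h (by omega))
  obtain ⟨rfl, hrest⟩ := append_inj h hlen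
  exact ⟨rfl, replicate_true_append_false_cons_inj (cons_inj_right _ |>.mp hrest)⟩

theorem exists_runWord_infix_sigmaWord {d j k : ℕ} (hjk : j + k + 2 ≤ d) (hd : d ≤ 2 ^ (j + 1)) :
    ∃ u v, u.length = k ∧ (runWord u j v).length = d ∧ runWord u j v <:+: sigmaWord d := by
  obtain ⟨p, hp⟩ := exists_sigmaWord_eq_append_replicate j
  obtain ⟨t, ht⟩ := exists_sigmaWord_eq_false_cons j
  have hplen : p.length + j + 1 = 2 ^ (j + 1) - 1 := by
    simpa [hp, add_assoc] using sigmaWord_length j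
  have htlen : t.length + 1 = 2 ^ (j + 1) - 1 := by simpa [ht] using sigmaWord_length j
  refine ⟨p.drop (p.length - k), t.take (d - j - 2 - k), ?_, ?_, ?_⟩
  · simp; omega
  · simp [runWord_length]; omega
  · refine IsInfix.trans ⟨p.take (p.length - k), t.drop (d - j - 2 - k), ?_⟩
      (sigmaWord_append_self_infix (show j < d by omega))
    have hsq : sigmaWord j ++ sigmaWord j = p ++ false :: (replicate j true ++ false :: t) := by
      nth_rw 1 [hp]; rw [ht, append_assoc]; rfl
    simp only [hsq, runWord, append_assoc, cons_append, take_append_drop]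
    rw [← append_assoc, take_append_drop]

theorem card_le_subCount {w : List Bool} {k : ℕ} {s : Finset (List Bool)}
    (h : ∀ x ∈ s, x <:+: w ∧ x.length = k) : s.card ≤ subCount w k := by
  rw [subCount, ← List.card_toFinset]
  refine Finset.card_le_card fun x hx => ?_
  obtain ⟨hinf, rfl⟩ := h x hx
  obtain ⟨y, ⟨r, rfl⟩, hy⟩ := infix_iff_prefix_suffix.mp hinf
  simpa using ⟨x ++ r, hy, take_left⟩

end

open Finset

theorem sum_Ico_sub_eq (a n : ℕ) :
    ∑ j ∈ Ico a n, (n - j) = (n - a) * (n - a + 1) / 2 := by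
  rw [sum_Ico_eq_sum_range]
  set c := n - a
  calc ∑ k ∈ range c, (n - (a + k)) = ∑ k ∈ range (c + 1), (c + 1 - 1 - k) := by
        rw [sum_range_succ, Nat.add_sub_cancel, Nat.sub_self, add_zero]
        exact sum_congr rfl fun k _ => by omega
    _ = c * (c + 1) / 2 := by rw [sum_range_reflect (fun k => k), sum_range_id, mul_comm]; rfl

theorem mul_sub_one_div_eight_le_half_mul_succ_half (d : ℕ) :
    (d : ℝ) * ((d : ℝ) - 1) / 8 ≤ ((d / 2 * (d / 2 + 1) / 2 : ℕ) : ℝ) := by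
  set c := d / 2
  have hdiv : 2 ∣ c * (c + 1) := (Nat.even_mul_succ_self c).two_dvd
  have hlo : (2 * c : ℝ) ≤ d := by exact_mod_cast (by omega : 2 * c ≤ d)
  have hhi : (d : ℝ) ≤ 2 * c + 1 := by exact_mod_cast (by omega : d ≤ 2 * c + 1)
  rw [Nat.cast_div hdiv (by norm_num)]
  push_cast
  nlinarith

theorem sum_Icc_eq_half_mul_succ_half (d : ℕ) :
    ∑ j ∈ Icc ((d + 1) / 2 - 1) (d - 2), (d - j - 1) = d / 2 * (d / 2 + 1) / 2 := by
  have hIco : ∑ j ∈ Icc ((d + 1) / 2 - 1) (d - 2), (d - j - 1)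
      = ∑ j ∈ Ico ((d + 1) / 2 - 1) (d - 1), (d - 1 - j) := by
    refine (sum_subset (fun j hj => ?_) fun j hj hj' => ?_).symm.trans
      (sum_congr rfl fun j _ => Nat.sub_right_comm d j 1)
    · simp only [mem_Ico, mem_Icc] at hj ⊢; omega
    · simp only [mem_Ico, mem_Icc] at hj hj'; omega
  rw [hIco, sum_Ico_sub_eq, show d - 1 - ((d + 1) / 2 - 1) = d / 2 by omega]

theorem sum_le_subCount_sigmaWord {d m : ℕ} (hm : d ≤ 2 * (m + 1)) :
    ∑ j ∈ Icc m (d - 2), (d - j - 1) ≤ subCount (sigmaWord d) d := by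
  set I := (Icc m (d - 2)).sigma fun j => range (d - j - 1)
  have hI : ∀ p ∈ I, m ≤ p.1 ∧ p.1 + p.2 + 2 ≤ d := by
    intro p hp
    simp only [I, mem_sigma, mem_Icc, mem_range] at hp
    omega
  have hpow : ∀ p ∈ I, d ≤ 2 ^ (p.1 + 1) := fun p hp =>
    hm.trans <| (Nat.mul_le_mul_left 2 (Nat.succ_le_succ (hI p hp).1)).trans <|
      Nat.mul_le_pow (by decide) _
  choose! u v hu hlen hinf using fun p hp => exists_runWord_infix_sigmaWord (hI p hp).2 (hpow p hp)
  have hinj : Set.InjOn (fun p => runWord (u p) p.1 (v p)) I := by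
    rintro ⟨j, k⟩ hp ⟨j', k'⟩ hq heq
    obtain ⟨hmj, hjk⟩ := hI _ hp
    obtain ⟨hmj', hjk'⟩ := hI _ hq
    obtain ⟨hu_eq, rfl, -⟩ := runWord_inj heq (by rw [hu _ hp]; omega) (by rw [hu _ hq]; omega)
    simpa [hu_eq, hu _ hq] using (hu _ hp).symm
  calc ∑ j ∈ Icc m (d - 2), (d - j - 1) = (I.image fun p => runWord (u p) p.1 (v p)).card := by
        rw [card_image_of_injOn hinj, card_sigma]; simp
    _ ≤ subCount (sigmaWord d) d := card_le_subCount fun x hx => by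
        obtain ⟨p, hp, rfl⟩ := mem_image.mp hx
        exact ⟨hinf p hp, hlen p hp⟩

theorem distinct_substring_count_lower_bound_general (d : ℕ) :
    ((Finset.Icc ((d + 1) / 2 - 1) (d - 2)).sum fun j => d - j - 1)
        = d / 2 * (d / 2 + 1) / 2 ∧
    ((Finset.Icc ((d + 1) / 2 - 1) (d - 2)).sum fun j => d - j - 1)
        ≤ subCount (sigmaM^[d] [false]) d ∧
    (d : ℝ) * ((d : ℝ) - 1) / 8 ≤ (subCount (sigmaM^[d] [false]) d : ℝ) := by
  refine ⟨sum_Icc_eq_half_mul_succ_half d, sum_le_subCount_sigmaWord (by omega), ?_⟩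
  calc (d : ℝ) * ((d : ℝ) - 1) / 8 ≤ ((d / 2 * (d / 2 + 1) / 2 : ℕ) : ℝ) :=
        mul_sub_one_div_eight_le_half_mul_succ_half d
    _ ≤ subCount (sigmaWord d) d := by
        exact_mod_cast sum_Icc_eq_half_mul_succ_half d ▸ sum_le_subCount_sigmaWord (by omega)

/-- For every d ≥ 4, the number of distinct substrings of length d of
L_d = σ^d(0) is at least Σ_{j=⌈d/2⌉-1}^{d-2} (d-j-1), which equals
⌊d/2⌋·(⌊d/2⌋+1)/2; in particular it is at least d(d-1)/8. -/
theorem distinct_substring_count_lower_bound (d : ℕ) (hd : 4 ≤ d) :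
    ((Finset.Icc ((d + 1) / 2 - 1) (d - 2)).sum fun j => d - j - 1)
        = d / 2 * (d / 2 + 1) / 2 ∧
    ((Finset.Icc ((d + 1) / 2 - 1) (d - 2)).sum fun j => d - j - 1)
        ≤ subCount (sigmaM^[d] [false]) d ∧
    (d : ℝ) * ((d : ℝ) - 1) / 8 ≤ (subCount (sigmaM^[d] [false]) d : ℝ) :=
  distinct_substring_count_lower_bound_general d
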